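/- Let K be a field of characteristic not 2 (characteristic 3 is allowed), and let a₁, a₂, a₃ ∈ K be nonzero with a₁², a₂², a₃² pairwise distinct and satisfying a₁a₂ = a₂a₃ + a₃a₁. Consider the elliptic curve E: y² = (x+a₁²)(x+a₂²)(x+a₃²). Then the point P = (0, a₁a₂a₃) ∈ E(K) has order 3, and E(K) contains a subgroup isomorphic to ℤ/6ℤ ⊕ ℤ/2ℤ. -/

import Mathlib

/-- The elliptic curve `y² = (x − α₁)(x − α₂)(x − α₃)` as an affine Weierstrass curve. -/
def cubicCurve {K : Type*} [Field K] (α₁ α₂ α₃ : K) : WeierstrassCurve.Affine K :=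
  { a₁ := 0, a₂ := -(α₁ + α₂ + α₃), a₃ := 0,
    a₄ := α₁ * α₂ + α₂ * α₃ + α₃ * α₁, a₆ := -(α₁ * α₂ * α₃) }

/-!
The tangent to `E` at `P = (0, a₁a₂a₃)` has slope `(Σ aᵢ²aⱼ²) / (2a₁a₂a₃)`, and the relation
`a₁a₂ = a₂a₃ + a₃a₁` makes it meet `E` with multiplicity three at `P`, so `2P = -P`.
The points `(-aᵢ², 0)` are the nonzero 2-torsion points. Together with `P` they give an
embedding of `ℤ/3 × (ℤ/2)² ≅ ℤ/6 × ℤ/2`: the two factors embed separately and their images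
meet trivially because their orders are coprime.
-/

open Function WeierstrassCurve.Affine

theorem AddMonoidHom.coprod_injective {A B G : Type*} [AddCommGroup A] [AddCommGroup B]
    [AddCommGroup G] {f : A →+ G} {g : B →+ G} (hf : Injective f) (hg : Injective g)
    (hfg : Disjoint f.range g.range) : Injective (f.coprod g) := by
  rw [injective_iff_map_eq_zero]
  rintro ⟨a, b⟩ hab
  have hfa : f a = g (-b) := by
    rw [map_neg, eq_neg_iff_add_eq_zero]; exact hab
  have hfa0 : f a = 0 := AddSubgroup.disjoint_def.mp hfg ⟨a, rfl⟩ (hfa ▸ ⟨-b, rfl⟩)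
  have hgb0 : g b = 0 := by simpa [hfa0] using hab
  simp [(injective_iff_map_eq_zero f).mp hf a hfa0, (injective_iff_map_eq_zero g).mp hg b hgb0]

theorem exists_zmod_addMonoidHom_injective {G : Type*} [AddGroup G] {x : G} {n : ℕ}
    (hx : addOrderOf x = n) : ∃ f : ZMod n →+ G, Injective f ∧ f 1 = x := by
  have hnx : zmultiplesHom G x n = 0 := by
    simp [← hx, addOrderOf_nsmul_eq_zero]
  refine ⟨ZMod.lift n ⟨_, hnx⟩, (ZMod.lift_injective n).mpr fun m hm => ?_, ?_⟩
  · rw [ZMod.intCast_zmod_eq_zero_iff_dvd, ← hx]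
    exact addOrderOf_dvd_iff_zsmul_eq_zero.mpr hm
  · simpa using ZMod.lift_coe n ⟨_, hnx⟩ 1

theorem exists_zmod_two_prod_zmod_two_addMonoidHom_injective {G : Type*} [AddCommGroup G]
    {T₁ T₂ : G} (h₁ : addOrderOf T₁ = 2) (h₂ : addOrderOf T₂ = 2) (hne : T₁ ≠ T₂) :
    ∃ f : ZMod 2 × ZMod 2 →+ G, Injective f := by
  obtain ⟨f₁, hf₁, rfl⟩ := exists_zmod_addMonoidHom_injective h₁
  obtain ⟨f₂, hf₂, rfl⟩ := exists_zmod_addMonoidHom_injective h₂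
  refine ⟨f₁.coprod f₂, AddMonoidHom.coprod_injective hf₁ hf₂ ?_⟩
  rw [AddSubgroup.disjoint_def]
  rintro _ ⟨a, rfl⟩ ⟨b, hb⟩
  have hcases : ∀ c : ZMod 2, c = 0 ∨ c = 1 := by decide
  rcases hcases a with rfl | rfl
  · exact map_zero f₁
  rcases hcases b with rfl | rfl
  · exact absurd (hb.symm.trans (map_zero f₂)) ((map_ne_zero_iff f₁ hf₁).mpr one_ne_zero)
  · exact absurd hb.symm hne

theorem exists_zmod_mul_two_prod_zmod_two_addMonoidHom_injective {G : Type*} [AddCommGroup G]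
    {P T₁ T₂ : G} {n : ℕ} (hP : addOrderOf P = n) (hn : Odd n)
    (h₁ : addOrderOf T₁ = 2) (h₂ : addOrderOf T₂ = 2) (hne : T₁ ≠ T₂) :
    ∃ φ : ZMod (n * 2) × ZMod 2 →+ G, Injective φ := by
  obtain ⟨f, hf, -⟩ := exists_zmod_addMonoidHom_injective hP
  obtain ⟨g, hg⟩ := exists_zmod_two_prod_zmod_two_addMonoidHom_injective h₁ h₂ hne
  have hcard : (Nat.card f.range).Coprime (Nat.card g.range) := by
    rw [← Nat.card_congr (AddMonoidHom.ofInjective hf).toEquiv,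
      ← Nat.card_congr (AddMonoidHom.ofInjective hg).toEquiv, Nat.card_prod, Nat.card_zmod,
      Nat.card_zmod]
    exact hn.coprime_two_right.mul_right hn.coprime_two_right
  let e : ZMod (n * 2) × ZMod 2 ≃+ ZMod n × (ZMod 2 × ZMod 2) :=
    ((ZMod.chineseRemainder hn.coprime_two_right).toAddEquiv.prodCongr
      (AddEquiv.refl _)).trans AddEquiv.prodAssoc
  exact ⟨(f.coprod g).comp e.toAddMonoidHom,
    (AddMonoidHom.coprod_injective hf hg (AddSubgroup.disjoint_of_coprime_natCard hcard)).comp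
      e.injective⟩

namespace WeierstrassCurve.Affine

variable {F : Type*} [Field F] [DecidableEq F] {W : Affine F}

theorem addOrderOf_some_eq_two {x y : F} {h : W.Nonsingular x y} (hy : y = W.negY x y) :
    addOrderOf (Point.some x y h) = 2 :=
  addOrderOf_eq_prime ((two_nsmul _).trans (Point.add_self_of_Y_eq hy)) (Point.some_ne_zero h)

theorem Point.add_self_of_addX_eq {x y : F} {h : W.Nonsingular x y} (hy : y ≠ W.negY x y)
    (hx : W.addX x x (W.slope x x y y) = x) :
    Point.some x y h + Point.some x y h = -Point.some x y h := by
  rw [Point.add_self_of_Y_ne hy, Point.neg_some]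
  congr 1
  simp only [addY, negAddY, hx, sub_self, mul_zero, zero_add]

theorem addOrderOf_some_eq_three_of_addX_eq {x y : F} {h : W.Nonsingular x y}
    (hy : y ≠ W.negY x y) (hx : W.addX x x (W.slope x x y y) = x) :
    addOrderOf (Point.some x y h) = 3 := by
  refine addOrderOf_eq_prime ?_ (Point.some_ne_zero h)
  rw [succ_nsmul, two_nsmul, Point.add_self_of_addX_eq hy hx, neg_add_cancel]

end WeierstrassCurve.Affine

section cubicCurve

variable {K : Type*} [Field K] {α₁ α₂ α₃ : K}

theorem cubicCurve_equation_iff {x y : K} :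
    (cubicCurve α₁ α₂ α₃).Equation x y ↔ y ^ 2 = (x - α₁) * (x - α₂) * (x - α₃) := by
  rw [equation_iff]
  simp only [cubicCurve]
  constructor <;> intro h <;> linear_combination h

theorem cubicCurve_negY (x y : K) : (cubicCurve α₁ α₂ α₃).negY x y = -y := by
  simp [negY, cubicCurve]

theorem cubicCurve_swap₁₂ (α₁ α₂ α₃ : K) : cubicCurve α₂ α₁ α₃ = cubicCurve α₁ α₂ α₃ := by
  ext <;> simp only [cubicCurve] <;> ring

theorem cubicCurve_nonsingular_root (h₁₂ : α₁ ≠ α₂) (h₁₃ : α₁ ≠ α₃) :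
    (cubicCurve α₁ α₂ α₃).Nonsingular α₁ 0 := by
  refine (nonsingular_iff _ _).mpr ⟨cubicCurve_equation_iff.mpr (by ring), Or.inl ?_⟩
  simp only [cubicCurve]
  intro h
  exact mul_ne_zero (sub_ne_zero.mpr h₁₂) (sub_ne_zero.mpr h₁₃) (by linear_combination -h)

theorem cubicCurve_nonsingular_of_Y_ne_zero (h2 : (2 : K) ≠ 0) {x y : K} (hy : y ≠ 0)
    (h : y ^ 2 = (x - α₁) * (x - α₂) * (x - α₃)) : (cubicCurve α₁ α₂ α₃).Nonsingular x y := by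
  refine (nonsingular_iff _ _).mpr ⟨cubicCurve_equation_iff.mpr h, Or.inr ?_⟩
  simp only [cubicCurve]
  intro h'
  exact mul_ne_zero h2 hy (by linear_combination h')

theorem cubicCurve_addOrderOf_root [DecidableEq K] {x : K}
    (h : (cubicCurve α₁ α₂ α₃).Nonsingular x 0) :
    addOrderOf (Point.some x 0 h) = 2 :=
  addOrderOf_some_eq_two (by rw [cubicCurve_negY, neg_zero])

theorem cubicCurve_Y_ne_negY (h2 : (2 : K) ≠ 0) {x y : K} (hy : y ≠ 0) :
    y ≠ (cubicCurve α₁ α₂ α₃).negY x y := by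
  rw [cubicCurve_negY]
  intro h
  exact mul_ne_zero h2 hy (by linear_combination h)

theorem cubicCurve_addOrderOf_eq_three [DecidableEq K] (h2 : (2 : K) ≠ 0) {y : K} (hy : y ≠ 0)
    (h : (cubicCurve α₁ α₂ α₃).Nonsingular 0 y)
    (hflex : (α₁ * α₂ + α₂ * α₃ + α₃ * α₁) ^ 2 = 4 * (α₁ * α₂ * α₃) * (α₁ + α₂ + α₃)) :
    addOrderOf (Point.some 0 y h) = 3 := by
  have hne : y ≠ (cubicCurve α₁ α₂ α₃).negY 0 y := cubicCurve_Y_ne_negY h2 hy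
  have hy2 : y ^ 2 = -(α₁ * α₂ * α₃) := by
    linear_combination cubicCurve_equation_iff.mp h.1
  have hslope : (cubicCurve α₁ α₂ α₃).slope 0 0 y y =
      (α₁ * α₂ + α₂ * α₃ + α₃ * α₁) / (2 * y) := by
    rw [slope_of_Y_ne rfl hne, cubicCurve_negY]
    simp only [cubicCurve]
    ring
  refine addOrderOf_some_eq_three_of_addX_eq hne ?_
  rw [hslope]
  simp only [addX, cubicCurve]
  field_simp
  linear_combination hflex + 4 * (α₁ + α₂ + α₃) * hy2

end cubicCurve

open Classical in
theorem order_three_point_and_Z6_Z2 {K : Type*} [Field K] (h2 : (2 : K) ≠ 0)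
    (a₁ a₂ a₃ : K) (ha₁ : a₁ ≠ 0) (ha₂ : a₂ ≠ 0) (ha₃ : a₃ ≠ 0)
    (h12 : a₁ ^ 2 ≠ a₂ ^ 2) (h13 : a₁ ^ 2 ≠ a₃ ^ 2) (h23 : a₂ ^ 2 ≠ a₃ ^ 2)
    (hrel : a₁ * a₂ = a₂ * a₃ + a₃ * a₁) :
    ∃ hP : (cubicCurve (-(a₁ ^ 2)) (-(a₂ ^ 2)) (-(a₃ ^ 2))).Nonsingular 0 (a₁ * a₂ * a₃),
      addOrderOf (WeierstrassCurve.Affine.Point.some _ _ hP) = 3 ∧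
      ∃ φ : (ZMod 6 × ZMod 2) →+ (cubicCurve (-(a₁ ^ 2)) (-(a₂ ^ 2)) (-(a₃ ^ 2))).Point,
        Function.Injective φ := by
  have hc : a₁ * a₂ * a₃ ≠ 0 := mul_ne_zero (mul_ne_zero ha₁ ha₂) ha₃
  have hP : (cubicCurve (-(a₁ ^ 2)) (-(a₂ ^ 2)) (-(a₃ ^ 2))).Nonsingular 0 (a₁ * a₂ * a₃) :=
    cubicCurve_nonsingular_of_Y_ne_zero h2 hc (by ring)
  -- With `u, v, w = a₁a₂, a₂a₃, a₃a₁` the flex condition reads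
  -- `(u² + v² + w²)² = 4(u²v² + v²w² + w²u²)`; the difference factors as in Heron's formula
  -- into `(u + v + w)(u - v + w)(u + v - w)(u - v - w)`.
  have hP3 := cubicCurve_addOrderOf_eq_three h2 hc hP (by
    linear_combination (a₁ * a₂ + a₂ * a₃ + a₃ * a₁) * (a₁ * a₂ - a₂ * a₃ + a₃ * a₁) *
      (a₁ * a₂ + a₂ * a₃ - a₃ * a₁) * hrel)
  have hT₁ := cubicCurve_nonsingular_root (neg_injective.ne h12) (neg_injective.ne h13)
  have hT₂ : (cubicCurve (-(a₁ ^ 2)) (-(a₂ ^ 2)) (-(a₃ ^ 2))).Nonsingular (-(a₂ ^ 2)) 0 :=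
    cubicCurve_swap₁₂ (K := K) _ _ _ ▸
      cubicCurve_nonsingular_root (neg_injective.ne h12.symm) (neg_injective.ne h23)
  refine ⟨hP, hP3, exists_zmod_mul_two_prod_zmod_two_addMonoidHom_injective hP3 (by decide)
    (cubicCurve_addOrderOf_root hT₁) (cubicCurve_addOrderOf_root hT₂) ?_⟩
  exact fun h => h12 (neg_injective (Point.some.inj h).1)
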